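/- arXiv:1311.4822 — 3 statements merged into one kernel-verified Lean document; each statement's English description precedes it below -/
import Mathlib

section
/- The alternative net reproductive number equals the norm of the partial next-generation newborn submatrix: R̂₀ = ‖W̄‖, where ‖W̄‖ is the maximum absolute column sum of W̄. -/
open Matrix BigOperators

/-- Spectral radius of a real square matrix: the maximum modulus of its complex
eigenvalues (elements of the spectrum of the matrix viewed over `ℂ`). -/
noncomputable def specRad {ι : Type*} [Fintype ι] [DecidableEq ι]
    (M : Matrix ι ι ℝ) : ℝ :=
  sSup {r : ℝ | ∃ μ : ℂ, μ ∈ spectrum ℂ (M.map Complex.ofReal) ∧ r = ‖μ‖}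

/-- The induced `L¹` operator norm of a real matrix: the maximum absolute column sum. -/
noncomputable def colNorm {ι : Type*} [Fintype ι] (M : Matrix ι ι ℝ) : ℝ :=
  ⨆ q, ∑ p, |M p q|

/-- Local fecundity matrix: first row `(f 0, …, f (m-1))`, other rows zero. -/
def localF (m : ℕ) (f : Fin m → ℝ) : Matrix (Fin m) (Fin m) ℝ :=
  Matrix.of fun k' k => if (k' : ℕ) = 0 then f k else 0

/-- Local survival matrix: diagonal entries `sd k`, subdiagonal entries `ss k`,
all other entries zero. -/
def localS (m : ℕ) (sd ss : Fin m → ℝ) : Matrix (Fin m) (Fin m) ℝ :=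
  Matrix.of fun k' k =>
    if k' = k then sd k else if (k' : ℕ) = (k : ℕ) + 1 then ss k else 0

/-- Global (block-diagonal) fecundity matrix `F = ⊕ᵢ Fⁱ`, indexed by
(stage, patch) pairs. -/
def fecMat (m n : ℕ) (f : Fin m → Fin n → ℝ) :
    Matrix (Fin m × Fin n) (Fin m × Fin n) ℝ :=
  Matrix.of fun p q =>
    if p.2 = q.2 then localF m (fun k => f k q.2) p.1 q.1 else 0

/-- Global (block-diagonal) survival matrix `S = ⊕ᵢ Sⁱ`. -/
def survMat (m n : ℕ) (sd ss : Fin m → Fin n → ℝ) :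
    Matrix (Fin m × Fin n) (Fin m × Fin n) ℝ :=
  Matrix.of fun p q =>
    if p.2 = q.2 then localS m (fun k => sd k q.2) (fun k => ss k q.2) p.1 q.1 else 0

/-- Global dispersion matrix: the `(i,j)` patch block is `diag (d 0 i j, …, d (m-1) i j)`. -/
def dispMat (m n : ℕ) (d : Fin m → Fin n → Fin n → ℝ) :
    Matrix (Fin m × Fin n) (Fin m × Fin n) ℝ :=
  Matrix.of fun p q => if p.1 = q.1 then d q.1 p.2 q.2 else 0

/-- Next-generation matrix `N = D F (I - D S)⁻¹`. -/
noncomputable def nextGen (m n : ℕ) (f : Fin m → Fin n → ℝ)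
    (sd ss : Fin m → Fin n → ℝ) (d : Fin m → Fin n → Fin n → ℝ) :
    Matrix (Fin m × Fin n) (Fin m × Fin n) ℝ :=
  dispMat m n d * fecMat m n f * (1 - dispMat m n d * survMat m n sd ss)⁻¹

/-- Partial next-generation matrix `W = F (I - D S)⁻¹`. -/
noncomputable def partGen (m n : ℕ) (f : Fin m → Fin n → ℝ)
    (sd ss : Fin m → Fin n → ℝ) (d : Fin m → Fin n → Fin n → ℝ) :
    Matrix (Fin m × Fin n) (Fin m × Fin n) ℝ :=
  fecMat m n f * (1 - dispMat m n d * survMat m n sd ss)⁻¹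

/-- Newborn submatrix: keep only the rows and columns with stage index `0`
(the newborn indices). -/
def newbornSub {m n : ℕ} (hm : 0 < m)
    (B : Matrix (Fin m × Fin n) (Fin m × Fin n) ℝ) : Matrix (Fin n) (Fin n) ℝ :=
  Matrix.of fun i j => B (⟨0, hm⟩, i) (⟨0, hm⟩, j)

/-- The alternative net reproductive number `R̂₀ = max_{x ∈ 𝒳} ‖N x‖`, where `𝒳`
is the set of nonnegative `L¹`-unit vectors supported on the newborn indices. -/
noncomputable def altR0 (m n : ℕ)
    (N : Matrix (Fin m × Fin n) (Fin m × Fin n) ℝ) : ℝ :=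
  sSup {r : ℝ | ∃ x : Fin m × Fin n → ℝ, (∀ p, 0 ≤ x p) ∧ (∑ p, |x p|) = 1 ∧
    (∀ p : Fin m × Fin n, (p.1 : ℕ) ≠ 0 → x p = 0) ∧ r = ∑ p, |N.mulVec x p|}


/-!
The dispersion matrix `D` is column-stochastic, so `N = D W` has the same column sums as `W`.
The matrix `D S` is nonnegative with column sums `< 1`, which forces `(I - D S)⁻¹ ≥ 0` and hence
`W ≥ 0`; and since `F` only has newborn rows, so does `W`. For nonnegative `N` and `x`,
`‖N x‖ = ∑_q (column sum q of N) x_q`, so over `𝒳` the maximum is the largest column sum of `N`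
at a newborn index, attained at a unit vector. That is the largest column sum of `W̄`, i.e. `‖W̄‖`.
-/

open Finset

namespace Matrix

variable {ι : Type*} [Fintype ι]

lemma mul_apply_nonneg {A B : Matrix ι ι ℝ} (hA : ∀ p q, 0 ≤ A p q) (hB : ∀ p q, 0 ≤ B p q)
    (p q : ι) : 0 ≤ (A * B) p q :=
  sum_nonneg fun r _ => mul_nonneg (hA p r) (hB r q)

lemma sum_mulVec_apply (A : Matrix ι ι ℝ) (x : ι → ℝ) :
    ∑ p, (A *ᵥ x) p = ∑ r, (∑ p, A p r) * x r := by
  simp_rw [mulVec, dotProduct, sum_mul]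
  exact sum_comm

lemma sum_mul_apply_of_sum_eq_one {A : Matrix ι ι ℝ} (hA : ∀ r, ∑ p, A p r = 1)
    (B : Matrix ι ι ℝ) (q : ι) : ∑ p, (A * B) p q = ∑ r, B r q := by
  have h := sum_mulVec_apply A (fun r => B r q)
  simp only [hA, one_mul] at h
  exact h

lemma eq_zero_of_le_mulVec {A : Matrix ι ι ℝ} (hcol : ∀ q, ∑ p, A p q < 1) {u : ι → ℝ}
    (hu : ∀ p, 0 ≤ u p) (hle : ∀ p, u p ≤ (A *ᵥ u) p) : u = 0 := by
  by_contra hne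
  obtain ⟨q, hq⟩ := Function.ne_iff.mp hne
  have hlt : ∑ p, (A *ᵥ u) p < ∑ p, u p := by
    rw [sum_mulVec_apply]
    exact sum_lt_sum (fun r _ => mul_le_of_le_one_left (hu r) (hcol r).le)
      ⟨q, mem_univ _, mul_lt_of_lt_one_left ((hu q).lt_of_ne' hq) (hcol q)⟩
  exact hlt.not_ge (sum_le_sum fun p _ => hle p)

lemma nonneg_of_nonneg_sub_mulVec {A : Matrix ι ι ℝ} (hA : ∀ p q, 0 ≤ A p q)
    (hcol : ∀ q, ∑ p, A p q < 1) {x : ι → ℝ} (hx : ∀ p, 0 ≤ x p - (A *ᵥ x) p) (p : ι) :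
    0 ≤ x p := by
  -- the negative part `u` of `x` satisfies `u ≤ A u`
  set u : ι → ℝ := fun r => max (-x r) 0
  have hle : ∀ r, u r ≤ (A *ᵥ u) r := fun r => max_le
    (calc -x r ≤ (A *ᵥ -x) r := by rw [mulVec_neg, Pi.neg_apply]; linarith [hx r]
      _ ≤ (A *ᵥ u) r := sum_le_sum fun s _ => mul_le_mul_of_nonneg_left (le_max_left _ _) (hA r s))
    (sum_nonneg fun s _ => mul_nonneg (hA r s) (le_max_right _ _))
  have hu := congrFun (eq_zero_of_le_mulVec hcol (fun r => le_max_right _ _) hle) p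
  simpa [u] using hu

-- Where `1 - A` is singular, `(1 - A)⁻¹` is the junk value `0`, which is nonnegative too.
lemma inv_one_sub_nonneg [DecidableEq ι] {A : Matrix ι ι ℝ} (hA : ∀ p q, 0 ≤ A p q)
    (hcol : ∀ q, ∑ p, A p q < 1) (p q : ι) : 0 ≤ (1 - A)⁻¹ p q := by
  by_cases h : IsUnit (1 - A).det
  · refine nonneg_of_nonneg_sub_mulVec hA hcol (x := fun r => (1 - A)⁻¹ r q) (fun r => ?_) p
    have hr := congrFun (congrFun (mul_nonsing_inv (1 - A) h) r) q
    rw [sub_mul, one_mul, sub_apply, one_apply] at hr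
    change 0 ≤ (1 - A)⁻¹ r q - (A * (1 - A)⁻¹) r q
    rw [hr]
    split_ifs <;> norm_num
  · simp [nonsing_inv_apply_not_isUnit _ h]

end Matrix

lemma colNorm_of_nonneg {ι : Type*} [Fintype ι] {M : Matrix ι ι ℝ} (hM : ∀ p q, 0 ≤ M p q) :
    colNorm M = ⨆ q, ∑ p, M p q := by
  unfold colNorm
  congr 1
  funext q
  exact sum_congr rfl fun p _ => abs_of_nonneg (hM p q)

section Model

variable {m n : ℕ}

lemma fecMat_nonneg {f : Fin m → Fin n → ℝ} (hf : ∀ k i, 0 ≤ f k i) (p q : Fin m × Fin n) :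
    0 ≤ fecMat m n f p q := by
  simp only [fecMat, localF, Matrix.of_apply]
  split_ifs <;> simp [hf]

lemma fecMat_apply_of_ne_zero (f : Fin m → Fin n → ℝ) {p : Fin m × Fin n} (hp : (p.1 : ℕ) ≠ 0)
    (q : Fin m × Fin n) : fecMat m n f p q = 0 := by
  simp [fecMat, localF, hp]

lemma survMat_nonneg {sd ss : Fin m → Fin n → ℝ} (hsd : ∀ k i, 0 ≤ sd k i)
    (hss : ∀ k i, 0 ≤ ss k i) (p q : Fin m × Fin n) : 0 ≤ survMat m n sd ss p q := by
  simp only [survMat, localS, Matrix.of_apply]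
  split_ifs <;> simp [hsd, hss]

lemma dispMat_nonneg {d : Fin m → Fin n → Fin n → ℝ} (hd0 : ∀ k i j, 0 ≤ d k i j)
    (p q : Fin m × Fin n) : 0 ≤ dispMat m n d p q := by
  simp only [dispMat, Matrix.of_apply]
  split_ifs <;> simp [hd0]

lemma sum_dispMat_apply {d : Fin m → Fin n → Fin n → ℝ} (hdsum : ∀ k j, ∑ i, d k i j = 1)
    (q : Fin m × Fin n) : ∑ p, dispMat m n d p q = 1 := by
  simp [dispMat, Fintype.sum_prod_type, hdsum]

lemma sum_localS_apply (sd ss : Fin m → ℝ) (k : Fin m) :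
    ∑ k', localS m sd ss k' k = sd k + if (k : ℕ) + 1 < m then ss k else 0 := by
  have hsplit : ∀ k', localS m sd ss k' k =
      (if k' = k then sd k else 0) + if (k' : ℕ) = k + 1 then ss k else 0 := by
    intro k'
    by_cases h : k' = k <;> simp [localS, h]
  simp only [hsplit, sum_add_distrib, sum_ite_eq', mem_univ, if_true,
    Fin.sum_univ_eq_sum_range (fun j => if j = (k : ℕ) + 1 then ss k else 0), mem_range]

lemma sum_survMat_apply (sd ss : Fin m → Fin n → ℝ) (k : Fin m) (i : Fin n) :
    ∑ p, survMat m n sd ss p (k, i) = sd k i + if (k : ℕ) + 1 < m then ss k i else 0 := by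
  have hlocal := sum_localS_apply (fun k => sd k i) (fun k => ss k i) k
  rw [← hlocal]
  simp [survMat, Fintype.sum_prod_type]

variable {f : Fin m → Fin n → ℝ} {sd ss : Fin m → Fin n → ℝ}
  {d : Fin m → Fin n → Fin n → ℝ}

lemma partGen_nonneg (hf : ∀ k i, 0 ≤ f k i) (hsd : ∀ k i, 0 ≤ sd k i)
    (hss : ∀ k i, 0 ≤ ss k i)
    (hs1 : ∀ k i, sd k i + (if (k : ℕ) + 1 < m then ss k i else 0) < 1)
    (hd0 : ∀ k i j, 0 ≤ d k i j) (hdsum : ∀ k j, ∑ i, d k i j = 1) (p q : Fin m × Fin n) :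
    0 ≤ partGen m n f sd ss d p q := by
  have hcol : ∀ q, ∑ p, (dispMat m n d * survMat m n sd ss) p q < 1 := by
    rintro ⟨k, i⟩
    rw [Matrix.sum_mul_apply_of_sum_eq_one (sum_dispMat_apply hdsum), sum_survMat_apply]
    exact hs1 k i
  have hDS := Matrix.mul_apply_nonneg (dispMat_nonneg hd0) (survMat_nonneg hsd hss)
  exact Matrix.mul_apply_nonneg (fecMat_nonneg hf) (Matrix.inv_one_sub_nonneg hDS hcol) p q

lemma partGen_apply_of_ne_zero {p : Fin m × Fin n} (hp : (p.1 : ℕ) ≠ 0) (q : Fin m × Fin n) :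
    partGen m n f sd ss d p q = 0 := by
  simp [partGen, Matrix.mul_apply, fecMat_apply_of_ne_zero f hp]

lemma nextGen_eq_dispMat_mul_partGen :
    nextGen m n f sd ss d = dispMat m n d * partGen m n f sd ss d :=
  Matrix.mul_assoc _ _ _

lemma sum_eq_sum_newborn (hm : 0 < m) {g : Fin m × Fin n → ℝ}
    (hg : ∀ p : Fin m × Fin n, (p.1 : ℕ) ≠ 0 → g p = 0) : ∑ p, g p = ∑ j, g (⟨0, hm⟩, j) := by
  rw [Fintype.sum_prod_type, sum_eq_single ⟨0, hm⟩]
  · exact fun k _ hk => sum_eq_zero fun j _ => hg (k, j) fun h => hk (Fin.ext h)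
  · simp

lemma altR0_eq_iSup (hm : 0 < m) [Nonempty (Fin n)]
    {N : Matrix (Fin m × Fin n) (Fin m × Fin n) ℝ} (hN : ∀ p q, 0 ≤ N p q) :
    altR0 m n N = ⨆ j, ∑ p, N p (⟨0, hm⟩, j) := by
  set z : Fin m := ⟨0, hm⟩
  set c : Fin n → ℝ := fun j => ∑ p, N p (z, j)
  obtain ⟨j₀, hj₀⟩ := Finite.exists_max c
  rw [le_antisymm (ciSup_le hj₀) (le_ciSup (Finite.bddAbove_range c) j₀)]
  refine IsGreatest.csSup_eq ⟨⟨Pi.single (z, j₀) 1, ?_, ?_, ?_, ?_⟩, ?_⟩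
  · intro p
    by_cases h : p = (z, j₀) <;> simp [h]
  · simp [Pi.single_apply, apply_ite abs]
  · exact fun p hp => Pi.single_eq_of_ne (by rintro rfl; exact hp rfl) 1
  · simp [c, mulVec_single, abs_of_nonneg (hN _ _)]
  rintro r ⟨x, hx0, hx1, hxs, rfl⟩
  have hxsum : ∑ j, x (z, j) = 1 := by
    rw [← sum_eq_sum_newborn hm hxs, ← hx1]
    exact sum_congr rfl fun p _ => (abs_of_nonneg (hx0 p)).symm
  calc ∑ p, |(N *ᵥ x) p| = ∑ q, (∑ p, N p q) * x q := by
        rw [← Matrix.sum_mulVec_apply]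
        exact sum_congr rfl fun p _ =>
          abs_of_nonneg (sum_nonneg fun q _ => mul_nonneg (hN p q) (hx0 q))
    _ = ∑ j, c j * x (z, j) := sum_eq_sum_newborn hm fun q hq => by simp [hxs q hq]
    _ ≤ ∑ j, c j₀ * x (z, j) := sum_le_sum fun j _ => mul_le_mul_of_nonneg_right (hj₀ j) (hx0 _)
    _ = c j₀ := by rw [← mul_sum, hxsum, mul_one]

end Model

theorem stmt1
    (m n : ℕ) (hm : 2 ≤ m) (hn : 1 ≤ n)
    (f : Fin m → Fin n → ℝ) (hf : ∀ k i, 0 ≤ f k i)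
    (sd ss : Fin m → Fin n → ℝ)
    (hsd : ∀ k i, 0 ≤ sd k i) (hss : ∀ k i, 0 ≤ ss k i)
    (hs1 : ∀ (k : Fin m) (i : Fin n),
      sd k i + (if (k : ℕ) + 1 < m then ss k i else 0) < 1)
    (d : Fin m → Fin n → Fin n → ℝ)
    (hd0 : ∀ k i j, 0 ≤ d k i j)
    (hdsum : ∀ k j, ∑ i, d k i j = 1) :
    altR0 m n (nextGen m n f sd ss d) =
      colNorm (newbornSub (show 0 < m by omega) (partGen m n f sd ss d)) := by
  have : Nonempty (Fin n) := ⟨⟨0, hn⟩⟩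
  have hW := partGen_nonneg hf hsd hss hs1 hd0 hdsum
  have hN : ∀ p q, 0 ≤ nextGen m n f sd ss d p q := by
    rw [nextGen_eq_dispMat_mul_partGen]
    exact Matrix.mul_apply_nonneg (dispMat_nonneg hd0) hW
  rw [altR0_eq_iSup _ hN,
    colNorm_of_nonneg (M := newbornSub _ (partGen m n f sd ss d)) fun i j => hW _ _]
  congr 1
  funext j
  rw [nextGen_eq_dispMat_mul_partGen,
    Matrix.sum_mul_apply_of_sum_eq_one (sum_dispMat_apply hdsum)]
  exact sum_eq_sum_newborn _ fun p hp => partGen_apply_of_ne_zero hp _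
end

section
/- The net reproductive number is bounded by the norms of the next-generation matrix and its newborn submatrix: R₀ ≤ ‖N̄‖ ≤ ‖N‖; moreover ‖W̄‖ ≤ ‖W‖. -/
/-!
Since `D` preserves stages and `F` only produces newborns, every non-newborn row of `N` vanishes.
Hence an eigenvector of `N` for a nonzero eigenvalue is supported on the newborn indices and
restricts to an eigenvector of `N̄` with the same eigenvalue, and every eigenvalue of a matrix is
bounded in modulus by its maximal absolute column sum. Deleting rows and columns can only decrease
column sums, which gives the other two inequalities.
-/

open Matrix BigOperators

section ColNorm

variable {ι κ : Type*} [Fintype ι] [Fintype κ]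

lemma colSum_le_colNorm (M : Matrix ι ι ℝ) (q : ι) : ∑ p, |M p q| ≤ colNorm M :=
  le_ciSup (Set.finite_range fun q => ∑ p, |M p q|).bddAbove q

lemma colNorm_nonneg (M : Matrix ι ι ℝ) : 0 ≤ colNorm M :=
  Real.iSup_nonneg fun _ => Finset.sum_nonneg fun _ _ => abs_nonneg _

lemma colNorm_submatrix_le (M : Matrix ι ι ℝ) {e : κ → ι} (he : Function.Injective e) :
    colNorm (M.submatrix e e) ≤ colNorm M := by
  refine Real.iSup_le (fun j => le_trans ?_ (colSum_le_colNorm M (e j))) (colNorm_nonneg M)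
  calc ∑ i, |M (e i) (e j)| = ∑ p ∈ Finset.univ.map ⟨e, he⟩, |M p (e j)| := by
        rw [Finset.sum_map]; rfl
    _ ≤ ∑ p, |M p (e j)| :=
        Finset.sum_le_univ_sum_of_nonneg fun _ => abs_nonneg _

lemma norm_le_colNorm_of_mulVec_eq_smul {M : Matrix ι ι ℝ} {μ : ℂ} {x : ι → ℂ} (hx : x ≠ 0)
    (hμ : M.map Complex.ofReal *ᵥ x = μ • x) : ‖μ‖ ≤ colNorm M := by
  have hpos : 0 < ∑ p, ‖x p‖ := by
    obtain ⟨p, hp⟩ := Function.ne_iff.mp hx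
    exact Finset.sum_pos' (fun p _ => norm_nonneg _) ⟨p, Finset.mem_univ _, norm_pos_iff.mpr hp⟩
  refine le_of_mul_le_mul_right ?_ hpos
  calc ‖μ‖ * ∑ p, ‖x p‖ = ∑ q, ‖(M.map Complex.ofReal *ᵥ x) q‖ := by
        simp only [hμ, Finset.mul_sum, Pi.smul_apply, smul_eq_mul, norm_mul]
    _ ≤ ∑ q, ∑ p, |M q p| * ‖x p‖ := by
        refine Finset.sum_le_sum fun q _ => (norm_sum_le _ _).trans_eq ?_
        simp
    _ = ∑ p, (∑ q, |M q p|) * ‖x p‖ := by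
        rw [Finset.sum_comm]
        simp only [Finset.sum_mul]
    _ ≤ colNorm M * ∑ p, ‖x p‖ := by
        rw [Finset.mul_sum]
        exact Finset.sum_le_sum fun p _ =>
          mul_le_mul_of_nonneg_right (colSum_le_colNorm M p) (norm_nonneg _)

end ColNorm

section SpecRad

variable {ι κ : Type*} [Fintype ι] [Fintype κ] [DecidableEq ι]

lemma Matrix.exists_mulVec_eq_smul_of_mem_spectrum {A : Matrix ι ι ℂ} {μ : ℂ}
    (hμ : μ ∈ spectrum ℂ A) : ∃ x : ι → ℂ, x ≠ 0 ∧ A *ᵥ x = μ • x := by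
  rw [spectrum.mem_iff, Algebra.algebraMap_eq_smul_one, Matrix.isUnit_iff_isUnit_det,
    isUnit_iff_ne_zero, not_not] at hμ
  obtain ⟨x, hx0, hx⟩ := Matrix.exists_mulVec_eq_zero_iff.mpr hμ
  refine ⟨x, hx0, ?_⟩
  rwa [Matrix.sub_mulVec, Matrix.smul_mulVec, Matrix.one_mulVec, sub_eq_zero, eq_comm] at hx

lemma specRad_le_colNorm_submatrix (M : Matrix ι ι ℝ) {e : κ → ι} (he : Function.Injective e)
    (hrow : ∀ p ∉ Set.range e, ∀ q, M p q = 0) : specRad M ≤ colNorm (M.submatrix e e) := by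
  refine Real.sSup_le ?_ (colNorm_nonneg _)
  rintro r ⟨μ, hμ, rfl⟩
  rcases eq_or_ne μ 0 with rfl | hμ0
  · simpa using colNorm_nonneg (M.submatrix e e)
  obtain ⟨x, hx0, hx⟩ := Matrix.exists_mulVec_eq_smul_of_mem_spectrum hμ
  have hsupp : ∀ p ∉ Set.range e, x p = 0 := fun p hp => by
    have hp' := congrFun hx p
    simp only [Matrix.mulVec, dotProduct, Matrix.map_apply, hrow p hp, Complex.ofReal_zero,
      zero_mul, Finset.sum_const_zero, Pi.smul_apply, smul_eq_mul] at hp'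
    exact (mul_eq_zero.mp hp'.symm).resolve_left hμ0
  refine norm_le_colNorm_of_mulVec_eq_smul (x := x ∘ e) ?_ ?_
  · intro hy
    refine hx0 (funext fun p => ?_)
    by_cases hp : p ∈ Set.range e
    · obtain ⟨i, rfl⟩ := hp
      exact congrFun hy i
    · exact hsupp p hp
  · funext i
    rw [← Pi.smul_comp, ← hx]
    exact Fintype.sum_of_injective e he _ _
      (fun p hp => by simp only [hsupp p hp, mul_zero]) fun _ => rfl

end SpecRad

lemma dispMat_mul_fecMat_apply_of_ne_zero {m n : ℕ} (f : Fin m → Fin n → ℝ)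
    (d : Fin m → Fin n → Fin n → ℝ) {p : Fin m × Fin n} (hp : (p.1 : ℕ) ≠ 0)
    (q : Fin m × Fin n) : (dispMat m n d * fecMat m n f) p q = 0 := by
  refine Finset.sum_eq_zero fun r _ => ?_
  by_cases h : p.1 = r.1
  · simp [fecMat, localF, ← h, hp]
  · simp [dispMat, h]

lemma nextGen_apply_of_ne_zero {m n : ℕ} (f : Fin m → Fin n → ℝ) (sd ss : Fin m → Fin n → ℝ)
    (d : Fin m → Fin n → Fin n → ℝ) {p : Fin m × Fin n} (hp : (p.1 : ℕ) ≠ 0)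
    (q : Fin m × Fin n) : nextGen m n f sd ss d p q = 0 := by
  rw [nextGen, Matrix.mul_apply]
  exact Finset.sum_eq_zero fun r _ => by
    rw [dispMat_mul_fecMat_apply_of_ne_zero f d hp, zero_mul]

lemma newbornSub_eq_submatrix {m n : ℕ} (hm : 0 < m)
    (B : Matrix (Fin m × Fin n) (Fin m × Fin n) ℝ) :
    newbornSub hm B = B.submatrix (Prod.mk ⟨0, hm⟩) (Prod.mk ⟨0, hm⟩) :=
  rfl

theorem stmt4
    (m n : ℕ) (hm : 2 ≤ m)
    (f : Fin m → Fin n → ℝ)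
    (sd ss : Fin m → Fin n → ℝ)
    (d : Fin m → Fin n → Fin n → ℝ) :
    specRad (nextGen m n f sd ss d) ≤
        colNorm (newbornSub (show 0 < m by omega) (nextGen m n f sd ss d)) ∧
      colNorm (newbornSub (show 0 < m by omega) (nextGen m n f sd ss d)) ≤
        colNorm (nextGen m n f sd ss d) ∧
      colNorm (newbornSub (show 0 < m by omega) (partGen m n f sd ss d)) ≤
        colNorm (partGen m n f sd ss d) := by
  have hm0 : 0 < m := by omega
  have hinj : Function.Injective (Prod.mk (⟨0, hm0⟩ : Fin m) : Fin n → Fin m × Fin n) :=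
    Prod.mk_right_injective _
  have hrow : ∀ p ∉ Set.range (Prod.mk (⟨0, hm0⟩ : Fin m)), ∀ q,
      nextGen m n f sd ss d p q = 0 := fun p hp =>
    nextGen_apply_of_ne_zero f sd ss d fun h0 => hp ⟨p.2, Prod.ext (Fin.ext h0.symm) rfl⟩
  simp only [newbornSub_eq_submatrix]
  exact ⟨specRad_le_colNorm_submatrix _ hinj hrow, colNorm_submatrix_le _ hinj,
    colNorm_submatrix_le _ hinj⟩
end

section
/- The net reproductive number satisfies the bound R₀ ≤ ‖F‖ / (1 − ‖S‖), where ‖F‖ = max_{k,i} f_k^i and ‖S‖ = max_{k,i} (s^i_{k,k} + s^i_{k+1,k}) < 1. In particular, the net reproductive number cannot be made arbitrarily large by varying the dispersion rates. -/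
/-! Transposing turns column sums into row sums, so `‖Dᵀ‖ = 1` (dispersal conserves individuals),
`‖Fᵀ‖ = max f` and `‖Sᵀ‖ = max (s_kk + s_{k+1,k}) < 1` in the ℓ∞ operator norm. Since
`Nᵀ = (I - SᵀDᵀ)⁻¹ FᵀDᵀ`, submultiplicativity and the Neumann series bound
`‖(I - A)⁻¹‖ ≤ (1 - ‖A‖)⁻¹` give `‖Nᵀ‖ ≤ ‖F‖ / (1 - ‖S‖)`, and the spectral radius of `N`, which
equals that of `Nᵀ`, is at most this norm. -/

open Matrix BigOperators

theorem Fin.sum_ite_val_eq {M : Type*} [AddCommMonoid M] {m : ℕ} (a : ℕ) (c : M) :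
    ∑ k : Fin m, (if (k : ℕ) = a then c else 0) = if a < m then c else 0 := by
  split_ifs with ha
  · rw [Fintype.sum_eq_single ⟨a, ha⟩ fun k hk => if_neg fun h => hk (Fin.ext h)]
    exact if_pos rfl
  · exact Finset.sum_eq_zero fun k _ => if_neg fun (h : (k : ℕ) = a) => ha (h ▸ k.isLt)

namespace Matrix

section LinftyOpNorm

attribute [local instance] Matrix.linftyOpSeminormedAddCommGroup

variable {l m α : Type*} [Fintype l] [Fintype m] [SeminormedAddCommGroup α]

theorem linfty_opNorm_le_of_row_sum_le [Nonempty l] (A : Matrix l m α) {c : ℝ}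
    (h : ∀ i, ∑ j, ‖A i j‖ ≤ c) : ‖A‖ ≤ c := by
  have hc : 0 ≤ c := (Finset.sum_nonneg fun j _ => norm_nonneg _).trans (h (Classical.arbitrary l))
  rw [linfty_opNorm_def, ← Real.le_toNNReal_iff_coe_le hc]
  refine Finset.sup_le fun i _ => (Real.le_toNNReal_iff_coe_le hc).mpr ?_
  simpa only [NNReal.coe_sum, coe_nnnorm] using h i

theorem linfty_opNorm_transpose_le_of_col_sum_le [Nonempty m] (A : Matrix l m α) {c : ℝ}
    (h : ∀ j, ∑ i, ‖A i j‖ ≤ c) : ‖Aᵀ‖ ≤ c :=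
  linfty_opNorm_le_of_row_sum_le Aᵀ h

theorem linfty_opNorm_map_ofReal (A : Matrix l m ℝ) : ‖A.map ((↑) : ℝ → ℂ)‖ = ‖A‖ := by
  simp only [linfty_opNorm_def, map_apply, Complex.nnnorm_real]

end LinftyOpNorm

theorem spectrum_transpose {R ι : Type*} [CommRing R] [Fintype ι] [DecidableEq ι]
    (M : Matrix ι ι R) : spectrum R Mᵀ = spectrum R M := by
  ext μ
  simp only [spectrum.mem_iff, isUnit_iff_isUnit_det, Algebra.algebraMap_eq_smul_one]
  rw [← det_transpose (μ • 1 - Mᵀ), transpose_sub, transpose_smul, transpose_one,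
    transpose_transpose]

end Matrix

theorem norm_ringInverse_one_sub_le {R : Type*} [NormedRing R] [CompleteSpace R]
    [NormOneClass R] (x : R) (h : ‖x‖ < 1) : ‖Ring.inverse (1 - x)‖ ≤ (1 - ‖x‖)⁻¹ := by
  simpa [← geom_series_eq_inverse x h] using tsum_geometric_le_of_norm_lt_one x h

section SpectralRadius

attribute [local instance] Matrix.linftyOpNormedRing Matrix.linftyOpNormedAlgebra

variable {ι : Type*} [Fintype ι] [DecidableEq ι]

theorem specRad_transpose (M : Matrix ι ι ℝ) : specRad Mᵀ = specRad M := by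
  rw [specRad, specRad, transpose_map, spectrum_transpose]

theorem specRad_le_linfty_opNorm [Nonempty ι] (M : Matrix ι ι ℝ) : specRad M ≤ ‖M‖ := by
  refine Real.sSup_le ?_ (norm_nonneg M)
  rintro _ ⟨μ, hμ, rfl⟩
  exact (spectrum.norm_le_norm_of_mem hμ).trans (linfty_opNorm_map_ofReal M).le

theorem linfty_opNorm_inv_one_sub_le [Nonempty ι] (A : Matrix ι ι ℝ) (h : ‖A‖ < 1) :
    ‖(1 - A)⁻¹‖ ≤ (1 - ‖A‖)⁻¹ := by
  rw [nonsing_inv_eq_ringInverse]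
  exact norm_ringInverse_one_sub_le A h

theorem linfty_opNorm_transpose_mul_mul_inv_one_sub_le [Nonempty ι] {D F S : Matrix ι ι ℝ}
    {φ σ : ℝ} (hD : ‖Dᵀ‖ ≤ 1) (hF : ‖Fᵀ‖ ≤ φ) (hS : ‖Sᵀ‖ ≤ σ) (hσ : σ < 1) :
    ‖(D * F * (1 - D * S)⁻¹)ᵀ‖ ≤ φ / (1 - σ) := by
  have hSD : ‖Sᵀ * Dᵀ‖ ≤ σ :=
    (linfty_opNorm_mul _ _).trans (by nlinarith [norm_nonneg Sᵀ, norm_nonneg Dᵀ])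
  have hFD : ‖Fᵀ * Dᵀ‖ ≤ φ :=
    (linfty_opNorm_mul _ _).trans (by nlinarith [norm_nonneg Fᵀ, norm_nonneg Dᵀ])
  have hinv : ‖(1 - Sᵀ * Dᵀ)⁻¹‖ ≤ (1 - σ)⁻¹ :=
    (linfty_opNorm_inv_one_sub_le _ (hSD.trans_lt hσ)).trans
      (inv_anti₀ (by linarith) (by linarith))
  rw [transpose_mul, transpose_mul, transpose_nonsing_inv, transpose_sub, transpose_one,
    transpose_mul, div_eq_inv_mul]
  calc ‖(1 - Sᵀ * Dᵀ)⁻¹ * (Fᵀ * Dᵀ)‖ ≤ ‖(1 - Sᵀ * Dᵀ)⁻¹‖ * ‖Fᵀ * Dᵀ‖ := linfty_opNorm_mul _ _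
    _ ≤ (1 - σ)⁻¹ * φ :=
      mul_le_mul hinv hFD (norm_nonneg _) (inv_nonneg.mpr (by linarith))

end SpectralRadius

section Metapopulation

attribute [local instance] Matrix.linftyOpNormedRing

variable {m n : ℕ}

theorem sum_abs_dispMat_col {d : Fin m → Fin n → Fin n → ℝ} (hd0 : ∀ k i j, 0 ≤ d k i j)
    (hdsum : ∀ k j, ∑ i, d k i j = 1) (q : Fin m × Fin n) :
    ∑ p, |dispMat m n d p q| = 1 := by
  simp [dispMat, Fintype.sum_prod_type, apply_ite, abs_of_nonneg (hd0 _ _ _), hdsum]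

theorem sum_abs_fecMat_col {f : Fin m → Fin n → ℝ} (hf : ∀ k i, 0 ≤ f k i)
    (q : Fin m × Fin n) : ∑ p, |fecMat m n f p q| = f q.1 q.2 := by
  simp [fecMat, localF, Fintype.sum_prod_type, apply_ite, abs_of_nonneg (hf _ _),
    Fin.sum_ite_val_eq, q.1.pos]

theorem sum_abs_survMat_col {sd ss : Fin m → Fin n → ℝ} (hsd : ∀ k i, 0 ≤ sd k i)
    (hss : ∀ k i, 0 ≤ ss k i) (q : Fin m × Fin n) :
    ∑ p, |survMat m n sd ss p q| = sd q.1 q.2 + if (q.1 : ℕ) + 1 < m then ss q.1 q.2 else 0 := by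
  have hcol : ∀ p : Fin m × Fin n, |survMat m n sd ss p q| = if p.2 = q.2 then
      (if p.1 = q.1 then sd q.1 q.2 else 0) +
        (if (p.1 : ℕ) = q.1 + 1 then ss q.1 q.2 else 0) else 0 := by
    intro p
    simp only [survMat, localS, of_apply]
    split_ifs <;> simp_all [abs_of_nonneg]
  simp only [hcol, Fintype.sum_prod_type, Finset.sum_ite_eq', Finset.mem_univ, if_true,
    Finset.sum_add_distrib, Fin.sum_ite_val_eq]

theorem specRad_nextGen_le [Nonempty (Fin m × Fin n)] {f : Fin m → Fin n → ℝ}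
    (hf : ∀ k i, 0 ≤ f k i) {sd ss : Fin m → Fin n → ℝ} (hsd : ∀ k i, 0 ≤ sd k i)
    (hss : ∀ k i, 0 ≤ ss k i) {d : Fin m → Fin n → Fin n → ℝ} (hd0 : ∀ k i j, 0 ≤ d k i j)
    (hdsum : ∀ k j, ∑ i, d k i j = 1)
    (hσ : (⨆ p : Fin m × Fin n,
      (sd p.1 p.2 + if (p.1 : ℕ) + 1 < m then ss p.1 p.2 else 0)) < 1) :
    specRad (nextGen m n f sd ss d) ≤ (⨆ p : Fin m × Fin n, f p.1 p.2) /
      (1 - ⨆ p : Fin m × Fin n, (sd p.1 p.2 + if (p.1 : ℕ) + 1 < m then ss p.1 p.2 else 0)) := by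
  rw [← specRad_transpose]
  refine (specRad_le_linfty_opNorm (nextGen m n f sd ss d)ᵀ).trans
    (linfty_opNorm_transpose_mul_mul_inv_one_sub_le ?_ ?_ ?_ hσ)
  all_goals refine linfty_opNorm_transpose_le_of_col_sum_le _ fun q => ?_
  · simp only [Real.norm_eq_abs, sum_abs_dispMat_col hd0 hdsum, le_refl]
  · simp only [Real.norm_eq_abs, sum_abs_fecMat_col hf]
    exact le_ciSup (Set.finite_range fun p : Fin m × Fin n => f p.1 p.2).bddAbove q
  · simp only [Real.norm_eq_abs, sum_abs_survMat_col hsd hss]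
    exact le_ciSup (Set.finite_range fun p : Fin m × Fin n =>
      sd p.1 p.2 + if (p.1 : ℕ) + 1 < m then ss p.1 p.2 else 0).bddAbove q

end Metapopulation

theorem stmt9_general
    (m n : ℕ) (hm : 2 ≤ m) (hn : 1 ≤ n)
    (f : Fin m → Fin n → ℝ) (hf : ∀ k i, 0 ≤ f k i)
    (sd ss : Fin m → Fin n → ℝ)
    (hsd : ∀ k i, 0 ≤ sd k i) (hss : ∀ k i, 0 ≤ ss k i)
    (hs1 : ∀ (k : Fin m) (i : Fin n),
      sd k i + (if (k : ℕ) + 1 < m then ss k i else 0) < 1)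
    (d : Fin m → Fin n → Fin n → ℝ)
    (hd0 : ∀ k i j, 0 ≤ d k i j)
    (hdsum : ∀ k j, ∑ i, d k i j = 1) :
    (⨆ p : Fin m × Fin n,
        (sd p.1 p.2 + if (p.1 : ℕ) + 1 < m then ss p.1 p.2 else 0)) < 1 ∧
      specRad (nextGen m n f sd ss d) ≤
        (⨆ p : Fin m × Fin n, f p.1 p.2) /
          (1 - ⨆ p : Fin m × Fin n,
            (sd p.1 p.2 + if (p.1 : ℕ) + 1 < m then ss p.1 p.2 else 0)) := by
  have : Nonempty (Fin m × Fin n) := ⟨(⟨0, by omega⟩, ⟨0, by omega⟩)⟩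
  have hσ : (⨆ p : Fin m × Fin n,
      (sd p.1 p.2 + if (p.1 : ℕ) + 1 < m then ss p.1 p.2 else 0)) < 1 := by
    obtain ⟨p, hp⟩ := exists_eq_ciSup_of_finite (f := fun p : Fin m × Fin n =>
      sd p.1 p.2 + if (p.1 : ℕ) + 1 < m then ss p.1 p.2 else 0)
    exact hp ▸ hs1 p.1 p.2
  exact ⟨hσ, specRad_nextGen_le hf hsd hss hd0 hdsum hσ⟩

theorem stmt9
    (m n : ℕ) (hm : 2 ≤ m) (hn : 1 ≤ n)
    (f : Fin m → Fin n → ℝ) (hf : ∀ k i, 0 ≤ f k i)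
    (sd ss : Fin m → Fin n → ℝ)
    (hsd : ∀ k i, 0 ≤ sd k i) (hss : ∀ k i, 0 ≤ ss k i)
    (hs1 : ∀ (k : Fin m) (i : Fin n),
      sd k i + (if (k : ℕ) + 1 < m then ss k i else 0) < 1)
    (d : Fin m → Fin n → Fin n → ℝ)
    (hd0 : ∀ k i j, 0 ≤ d k i j) (hd1 : ∀ k i j, d k i j ≤ 1)
    (hdsum : ∀ k j, ∑ i, d k i j = 1) :
    (⨆ p : Fin m × Fin n,
        (sd p.1 p.2 + if (p.1 : ℕ) + 1 < m then ss p.1 p.2 else 0)) < 1 ∧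
      specRad (nextGen m n f sd ss d) ≤
        (⨆ p : Fin m × Fin n, f p.1 p.2) /
          (1 - ⨆ p : Fin m × Fin n,
            (sd p.1 p.2 + if (p.1 : ℕ) + 1 < m then ss p.1 p.2 else 0)) :=
  stmt9_general m n hm hn f hf sd ss hsd hss hs1 d hd0 hdsum
end
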